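/- Let G be the family of 3-element subsets of [7] given by G = {123, 124, 127, 136, 137, 146, 147, 157, 167, 234, 245, 246, 247, 257, 267, 345, 457} (where, e.g., 123 denotes the set {1,2,3}). Then Bob(G) holds but Alice(G) does not hold. In particular, the implication 'Bob(F) implies Alice(F) on odd boards' fails for families that are not pointwise-increasing. -/

import Mathlib

/-- The board `[n] = {1, …, n}` as a finite set of natural numbers. -/
def board (n : ℕ) : Finset ℕ := Finset.Icc 1 n

/-- The order-preserving relabelling of `[n] \ {x}` onto `[n-1]`:
elements below `x` are unchanged, elements above `x` drop by one. -/
def stdElt (x r : ℕ) : ℕ := if r < x then r else r - 1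

/-- Standardise a set avoiding `x`: relabel it via `stdElt x`. -/
def stdSet (x : ℕ) (S : Finset ℕ) : Finset ℕ := S.image (stdElt x)

/-- The standardised section `F_x^+ = { S \ {x} : x ∈ S ∈ F }`,
viewed as a family of subsets of `[n-1]`. -/
def secPlus (F : Set (Finset ℕ)) (x : ℕ) : Set (Finset ℕ) :=
  {T | ∃ S ∈ F, x ∈ S ∧ T = stdSet x (S.erase x)}

/-- The standardised section `F_x^- = { S ∈ F : x ∉ S }`,
viewed as a family of subsets of `[n-1]`. -/
def secMinus (F : Set (Finset ℕ)) (x : ℕ) : Set (Finset ℕ) :=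
  {T | ∃ S ∈ F, x ∉ S ∧ T = stdSet x S}

mutual
  /-- `AliceWins n k F`: Alice wins her `F`-game, where `F` is a family of
  `k`-subsets of `[n]`.  Terminal games (`k = 0` or `k = n`) are won iff `F`
  is nonempty; otherwise Alice needs a first offer `x` such that Bob wins both
  his `F_x^+`-game and his `F_x^-`-game. -/
  def AliceWins (n k : ℕ) (F : Set (Finset ℕ)) : Prop :=
    if h : k = 0 ∨ n ≤ k then F.Nonempty
    else ∃ x ∈ board n,
      BobWins (n - 1) (k - 1) (secPlus F x) ∧ BobWins (n - 1) k (secMinus F x)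
  termination_by n
  decreasing_by all_goals omega

  /-- `BobWins n k F`: Bob wins his `F`-game, where `F` is a family of
  `k`-subsets of `[n]`.  Terminal games (`k = 0` or `k = n`) are won iff `F`
  is nonempty; otherwise Bob needs, for every first offer `x`, that Alice wins
  her `F_x^+`-game or her `F_x^-`-game. -/
  def BobWins (n k : ℕ) (F : Set (Finset ℕ)) : Prop :=
    if h : k = 0 ∨ n ≤ k then F.Nonempty
    else ∀ x ∈ board n,
      AliceWins (n - 1) (k - 1) (secPlus F x) ∨ AliceWins (n - 1) k (secMinus F x)
  termination_by n
  decreasing_by all_goals omega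
end

/-- `S ⪯ T` in the pointwise order: the increasing enumerations of `S` and `T`
have the same length and are pointwise `≤`. -/
def PointwiseLE (S T : Finset ℕ) : Prop :=
  List.Forall₂ (· ≤ ·) (S.sort (· ≤ ·)) (T.sort (· ≤ ·))

/-- `F` consists of `k`-element subsets of `[n]`. -/
def IsFamilyOn (n k : ℕ) (F : Set (Finset ℕ)) : Prop :=
  ∀ S ∈ F, S ⊆ board n ∧ S.card = k

/-- `F` is pointwise-increasing as a family of `k`-subsets of `[n]`:
it is upwards closed in the pointwise order. -/
def IsIncreasingFamily (n k : ℕ) (F : Set (Finset ℕ)) : Prop :=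
  ∀ S T : Finset ℕ, S ∈ F → T ⊆ board n → T.card = k → PointwiseLE S T → T ∈ F

/-- The explicit family `G ⊆ [7]^(3)` from the concluding section. -/
def familyG : Set (Finset ℕ) :=
  {{1,2,3}, {1,2,4}, {1,2,7}, {1,3,6}, {1,3,7}, {1,4,6}, {1,4,7}, {1,5,7},
   {1,6,7}, {2,3,4}, {2,4,5}, {2,4,6}, {2,4,7}, {2,5,7}, {2,6,7}, {3,4,5},
   {4,5,7}}


def secPlusFinset (F : Finset (Finset ℕ)) (x : ℕ) : Finset (Finset ℕ) :=
  {S ∈ F | x ∈ S}.image fun S => stdSet x (S.erase x)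

def secMinusFinset (F : Finset (Finset ℕ)) (x : ℕ) : Finset (Finset ℕ) :=
  {S ∈ F | x ∉ S}.image (stdSet x)

theorem secPlus_coe (F : Finset (Finset ℕ)) (x : ℕ) :
    secPlus F x = secPlusFinset F x := by
  ext T
  simp [secPlus, secPlusFinset, and_assoc, eq_comm]

theorem secMinus_coe (F : Finset (Finset ℕ)) (x : ℕ) :
    secMinus F x = secMinusFinset F x := by
  ext T
  simp [secMinus, secMinusFinset, and_assoc, eq_comm]

/-- `AliceWins` and `BobWins` recurse on sets by well-founded recursion, so the kernel cannot
evaluate them; `winsBool n alice k F` is the structurally recursive counterpart on finite families,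
computing Alice's game when `alice` is `true` and Bob's otherwise. -/
def winsBool : ℕ → Bool → ℕ → Finset (Finset ℕ) → Bool
  | 0, _, _, F => F.Nonempty
  | n + 1, alice, k, F =>
    if k = 0 ∨ n + 1 ≤ k then F.Nonempty
    else if alice then
      decide (∃ x ∈ board (n + 1),
        winsBool n false (k - 1) (secPlusFinset F x) ∧ winsBool n false k (secMinusFinset F x))
    else
      decide (∀ x ∈ board (n + 1),
        winsBool n true (k - 1) (secPlusFinset F x) ∨ winsBool n true k (secMinusFinset F x))

theorem wins_coe_iff_winsBool (n k : ℕ) (F : Finset (Finset ℕ)) :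
    (AliceWins n k F ↔ winsBool n true k F) ∧ (BobWins n k F ↔ winsBool n false k F) := by
  induction n generalizing k F with
  | zero => simp [AliceWins, BobWins, winsBool]
  | succ n ih =>
    rw [AliceWins, BobWins, winsBool, winsBool]
    by_cases h : k = 0 ∨ n + 1 ≤ k <;> simp [*, secPlus_coe, secMinus_coe]

/-- Bob wins his `G`-game but Alice does not win her
`G`-game; so the odd-board implication fails without monotonicity. -/
theorem counterexample_odd : BobWins 7 3 familyG ∧ ¬ AliceWins 7 3 familyG := by
  simp only [familyG, ← Finset.coe_insert, ← Finset.coe_singleton]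
  rw [(wins_coe_iff_winsBool 7 3 _).1, (wins_coe_iff_winsBool 7 3 _).2]
  decide
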